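/- arXiv:2509.17426 — 2 statements merged into one kernel-verified Lean document; each statement's English description precedes it below -/
import Mathlib

section
/- Let n ≥ 1 and let v ∈ Conv_MA(ℝⁿ;ℝ), i.e., v = h_K(·,−1) for some non-empty compact convex set K ⊂ ℝ^{n+1} and the Monge–Ampère measure MA(v;·) has compact support. Then the Legendre transform v* is a lower semicontinuous convex function with compact effective domain that is Lipschitz on the interior of its effective domain; that is, v* ∈ Conv_{cd,Lip}(ℝⁿ). -/
open MeasureTheory Filter Topology Metric Set
open scoped ENNReal NNReal

noncomputable section

abbrev En (n : ℕ) : Type := EuclideanSpace ℝ (Fin n)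

/-- Aleksandrov second-order expansion of `f` at `x`, with gradient `g` and
symmetric Hessian `H`. -/
def HasAlexHessianAt {n : ℕ} (f : En n → ℝ) (x g : En n) (H : En n →L[ℝ] En n) : Prop :=
  (∀ a b : En n, (inner ℝ (H a) b : ℝ) = (inner ℝ a (H b) : ℝ)) ∧
  Filter.Tendsto
    (fun y => (f y - f x - (inner ℝ g (y - x) : ℝ) -
        (1/2) * (inner ℝ (H (y - x)) (y - x) : ℝ)) / ‖y - x‖ ^ 2)
    (𝓝[≠] x) (𝓝 0)

open scoped Classical in
/-- The determinant of the Aleksandrov Hessian of `f` at `x`; `0` when `f` is not twice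
differentiable at `x` in the sense of Aleksandrov. -/
noncomputable def hessDet {n : ℕ} (f : En n → ℝ) (x : En n) : ℝ :=
  if h : ∃ gH : En n × (En n →L[ℝ] En n), HasAlexHessianAt f x gH.1 gH.2 then
    LinearMap.det h.choose.2.toLinearMap
  else 0

/-- Effective domain of an extended-real-valued function. -/
def edom {n : ℕ} (u : En n → EReal) : Set (En n) := {x | u x ≠ ⊤}

open scoped Classical in
/-- Hessian determinant for extended-real-valued functions: taken at interior points of
the effective domain, and `0` elsewhere. -/
noncomputable def hessDetE {n : ℕ} (u : En n → EReal) (x : En n) : ℝ :=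
  if x ∈ interior (edom u) then hessDet (fun y => (u y).toReal) x else 0

/-- `u ∈ Conv_{cd,Lip}(ℝⁿ)`: lower semicontinuous, convex (via its epigraph),
proper with values in `(-∞,∞]`, compact effective domain, Lipschitz on the interior
of the domain. -/
def IsConvCdLip {n : ℕ} (u : En n → EReal) : Prop :=
  LowerSemicontinuous u ∧
  Convex ℝ {p : En n × ℝ | u p.1 ≤ (p.2 : EReal)} ∧
  (∀ x, u x ≠ ⊥) ∧
  (edom u).Nonempty ∧
  IsCompact (edom u) ∧
  ∃ L : ℝ≥0, LipschitzOnWith L (fun x => (u x).toReal) (interior (edom u))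

/-- Epi-convergence of a sequence of extended-real-valued functions. -/
def EpiConverges {n : ℕ} (us : ℕ → En n → EReal) (u : En n → EReal) : Prop :=
  ∀ x : En n,
    (∀ xs : ℕ → En n, Filter.Tendsto xs Filter.atTop (𝓝 x) →
      u x ≤ Filter.liminf (fun k => us k (xs k)) Filter.atTop) ∧
    (∃ xs : ℕ → En n, Filter.Tendsto xs Filter.atTop (𝓝 x) ∧
      Filter.Tendsto (fun k => us k (xs k)) Filter.atTop (𝓝 (u x)))

/-- `ζ ∈ Conc([0,∞))`: concave, nonnegative on `[0,∞)`, `ζ(t) → 0` as `t → 0⁺`, and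
`ζ(t)/t → 0` as `t → ∞`. -/
def MemConc (ζ : ℝ → ℝ) : Prop :=
  ConcaveOn ℝ (Set.Ici 0) ζ ∧
  (∀ t : ℝ, 0 ≤ t → 0 ≤ ζ t) ∧
  Filter.Tendsto ζ (𝓝[>] (0:ℝ)) (𝓝 0) ∧
  Filter.Tendsto (fun t => ζ t / t) Filter.atTop (𝓝 0)

/-- `ζ ∈ Cvx([0,∞))`: decreasing, convex, with values in `(0,∞]`, right-continuous at `0`,
and `ζ(t) → 0` as `t → ∞`. -/
def MemCvx (ζ : ℝ → ℝ≥0∞) : Prop :=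
  (∀ t : ℝ, 0 ≤ t → 0 < ζ t) ∧
  (∀ s t : ℝ, 0 ≤ s → 0 ≤ t → ∀ a b : ℝ, 0 ≤ a → 0 ≤ b → a + b = 1 →
    ζ (a * s + b * t) ≤ ENNReal.ofReal a * ζ s + ENNReal.ofReal b * ζ t) ∧
  (∀ s t : ℝ, 0 ≤ s → s ≤ t → ζ t ≤ ζ s) ∧
  Filter.Tendsto ζ (𝓝[>] (0:ℝ)) (𝓝 (ζ 0)) ∧
  Filter.Tendsto ζ Filter.atTop (𝓝 (0 : ℝ≥0∞))

/-- Weak* convergence of measures: convergence of integrals of continuous functions of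
compact support. -/
def WeakStarTendsto {X : Type*} [TopologicalSpace X] [MeasurableSpace X]
    (μs : ℕ → Measure X) (μ : Measure X) : Prop :=
  ∀ β : X → ℝ, Continuous β → HasCompactSupport β →
    Filter.Tendsto (fun k => ∫ x, β x ∂(μs k)) Filter.atTop (𝓝 (∫ x, β x ∂μ))

/-- Subdifferential of a finite-valued function. -/
def subdiff {n : ℕ} (v : En n → ℝ) (x : En n) : Set (En n) :=
  {y | ∀ z, v x + (inner ℝ y (z - x) : ℝ) ≤ v z}

/-- Image of a set through the subdifferential. -/
def subdiffImage {n : ℕ} (v : En n → ℝ) (B : Set (En n)) : Set (En n) :=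
  ⋃ x ∈ B, subdiff v x

/-- `v ∈ Conv_MA(ℝⁿ;ℝ)`: `v = h_K(·,-1)` for some non-empty compact convex
`K ⊂ ℝ^{n+1}`, and the Monge–Ampère measure `B ↦ V_n(∂v(B))` of `v` has compact support. -/
def IsConvMA {n : ℕ} (v : En n → ℝ) : Prop :=
  (∃ K : Set (En n × ℝ), K.Nonempty ∧ IsCompact K ∧ Convex ℝ K ∧
    ∀ x, v x = sSup ((fun p : En n × ℝ => (inner ℝ x p.1 : ℝ) - p.2) '' K)) ∧
  (∃ C : Set (En n), IsCompact C ∧ volume (subdiffImage v Cᶜ) = 0)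

/-- τ*-convergence on `Conv_MA(ℝⁿ;ℝ)`: epi-convergence plus a common compact set
carrying all the Monge–Ampère measures. -/
def TauStarTendsto {n : ℕ} (vs : ℕ → En n → ℝ) (v : En n → ℝ) : Prop :=
  EpiConverges (fun k x => ((vs k x : ℝ) : EReal)) (fun x => ((v x : ℝ) : EReal)) ∧
  ∃ C : Set (En n), IsCompact C ∧ volume (subdiffImage v Cᶜ) = 0 ∧
    ∀ k, volume (subdiffImage (vs k) Cᶜ) = 0

/-- The Legendre transform (convex conjugate). -/
noncomputable def legendre {n : ℕ} (u : En n → EReal) (y : En n) : EReal :=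
  ⨆ x : En n, (((inner ℝ x y : ℝ) : EReal) - u x)

private lemma ereal_iSup_coe {ι : Type*} [Nonempty ι] {f : ι → ℝ} (h : BddAbove (Set.range f)) :
    (⨆ i, ((f i : ℝ) : EReal)) = (((⨆ i, f i : ℝ)) : EReal) := by
  refine le_antisymm (iSup_le fun i => EReal.coe_le_coe_iff.2 (le_ciSup h i)) ?_
  by_contra hlt
  push_neg at hlt
  set b := ⨆ i, ((f i : ℝ) : EReal) with hb
  have hbt : b ≠ ⊤ := (hlt.trans_le le_top).ne
  have hbb : b ≠ ⊥ := by
    obtain ⟨i⟩ := ‹Nonempty ι›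
    intro hB
    have h1 : ((f i : ℝ) : EReal) ≤ b := le_iSup (fun i => ((f i : ℝ) : EReal)) i
    rw [hB] at h1
    exact EReal.coe_ne_bot _ (le_bot_iff.1 h1)
  have hfi : ∀ i, f i ≤ b.toReal := fun i => by
    have h1 : ((f i : ℝ) : EReal) ≤ b := le_iSup (fun i => ((f i : ℝ) : EReal)) i
    rw [← EReal.coe_toReal hbt hbb] at h1
    exact EReal.coe_le_coe_iff.1 h1
  have h2 : ((⨆ i, f i : ℝ) : EReal) ≤ b := by
    rw [← EReal.coe_toReal hbt hbb]
    exact EReal.coe_le_coe_iff.2 (ciSup_le hfi)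
  exact absurd hlt (not_lt.2 h2)

private lemma ereal_iSup_top {ι : Type*} [Nonempty ι] {f : ι → ℝ} (h : ¬BddAbove (Set.range f)) :
    (⨆ i, ((f i : ℝ) : EReal)) = ⊤ := by
  by_contra hne
  set b := ⨆ i, ((f i : ℝ) : EReal) with hb
  have hbb : b ≠ ⊥ := by
    obtain ⟨i⟩ := ‹Nonempty ι›
    intro hB
    have h1 : ((f i : ℝ) : EReal) ≤ b := le_iSup (fun i => ((f i : ℝ) : EReal)) i
    rw [hB] at h1
    exact EReal.coe_ne_bot _ (le_bot_iff.1 h1)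
  refine h ⟨b.toReal, ?_⟩
  rintro r ⟨i, rfl⟩
  have h1 : ((f i : ℝ) : EReal) ≤ b := le_iSup (fun i => ((f i : ℝ) : EReal)) i
  rw [← EReal.coe_toReal hne hbb] at h1
  exact EReal.coe_le_coe_iff.1 h1

/-- The Legendre transform of a function in `Conv_MA(ℝⁿ;ℝ)` belongs to
`Conv_{cd,Lip}(ℝⁿ)`. -/
theorem legendre_of_ConvMA_mem_ConvCdLip {n : ℕ} (hn : 1 ≤ n)
    (v : En n → ℝ) (hv : IsConvMA v) :
    IsConvCdLip (legendre (fun x => ((v x : ℝ) : EReal))) := by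
  obtain ⟨⟨K, hKne, hKcomp, hKconv, hKv⟩, C, hCcomp, hCnull⟩ := hv
  set u : En n → EReal := fun x => ((v x : ℝ) : EReal) with hu
  set φ : En n → En n → ℝ := fun y z => (inner ℝ z y : ℝ) - v z with hφ
  have hleg : ∀ y, legendre u y = ⨆ z, ((φ y z : ℝ) : EReal) := by
    intro y
    simp only [legendre, hu, hφ, EReal.coe_sub]
  -- basic facts about v
  have hbddK : ∀ x : En n, BddAbove ((fun p : En n × ℝ => (inner ℝ x p.1 : ℝ) - p.2) '' K) := by
    intro x
    exact (hKcomp.image ((continuous_const.inner continuous_fst).sub continuous_snd)).bddAbove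
  have hvge : ∀ (x : En n) {p : En n × ℝ}, p ∈ K → (inner ℝ x p.1 : ℝ) - p.2 ≤ v x := by
    intro x p hp
    rw [hKv x]
    exact le_csSup (hbddK x) ⟨p, hp, rfl⟩
  have himK : ∀ (x : En n) (M : ℝ), (∀ p ∈ K, (inner ℝ x p.1 : ℝ) - p.2 ≤ M) → v x ≤ M := by
    intro x M hM
    rw [hKv x]
    exact csSup_le (hKne.image _) (by rintro r ⟨p, hp, rfl⟩; exact hM p hp)
  have hvconv : ConvexOn ℝ Set.univ v := by
    refine ⟨convex_univ, ?_⟩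
    intro x _ y _ a b ha hb hab
    refine himK _ _ fun p hp => ?_
    have h1 := hvge x hp
    have h2 := hvge y hp
    have e : (inner ℝ (a • x + b • y) p.1 : ℝ) - p.2
        = a * ((inner ℝ x p.1 : ℝ) - p.2) + b * ((inner ℝ y p.1 : ℝ) - p.2) := by
      rw [inner_add_left, real_inner_smul_left, real_inner_smul_left]
      linear_combination p.2 * hab
    rw [e]
    simp only [smul_eq_mul]
    have := mul_le_mul_of_nonneg_left h1 ha
    have := mul_le_mul_of_nonneg_left h2 hb
    linarith
  have hvcont : Continuous v := by
    rw [← continuousOn_univ]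
    exact hvconv.continuousOn isOpen_univ
  have hφcont : ∀ y, Continuous (φ y) := by
    intro y
    simp only [hφ]
    exact (continuous_id.inner continuous_const).sub hvcont
  -- edom facts
  have hKdom : ∀ p : En n × ℝ, p ∈ K → p.1 ∈ edom (legendre u) := by
    intro p hp
    have hle : legendre u p.1 ≤ ((p.2 : ℝ) : EReal) := by
      rw [hleg]
      refine iSup_le fun z => EReal.coe_le_coe_iff.2 ?_
      have := hvge z hp
      simp only [hφ]
      linarith
    simp only [edom, Set.mem_setOf_eq]
    exact (lt_of_le_of_lt hle (EReal.coe_lt_top _)).ne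
  have hbdd : ∀ y ∈ edom (legendre u), BddAbove (Set.range (φ y)) := by
    intro y hy
    simp only [edom, Set.mem_setOf_eq] at hy
    by_contra h
    exact hy (by rw [hleg]; exact ereal_iSup_top h)
  set w : En n → ℝ := fun y => (legendre u y).toReal with hwdef
  have hwe : ∀ y ∈ edom (legendre u), legendre u y = ((w y : ℝ) : EReal) ∧ w y = ⨆ z, φ y z := by
    intro y hy
    have h1 : legendre u y = (((⨆ z, φ y z : ℝ)) : EReal) := by
      rw [hleg]; exact ereal_iSup_coe (hbdd y hy)
    have h2 : w y = ⨆ z, φ y z := by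
      simp only [hwdef]
      rw [h1, EReal.toReal_coe]
    exact ⟨by rw [h2, ← h1], h2⟩
  have hF : ∀ y ∈ edom (legendre u), ∀ x, φ y x ≤ w y := by
    intro y hy x
    rw [(hwe y hy).2]
    exact le_ciSup (hbdd y hy) x
  have hwle : ∀ y ∈ edom (legendre u), ∀ M : ℝ, (∀ z, φ y z ≤ M) → w y ≤ M := by
    intro y hy M hM
    rw [(hwe y hy).2]
    exact ciSup_le hM
  have hSconv : Convex ℝ (Prod.fst '' K) := by
    rintro _ ⟨p, hp, rfl⟩ _ ⟨q, hq, rfl⟩ a b ha hb hab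
    exact ⟨a • p + b • q, hKconv hp hq ha hb hab, by simp⟩
  -- edom = projection of K
  have hdom_eq : edom (legendre u) = Prod.fst '' K := by
    apply Subset.antisymm
    · intro y hy
      by_contra hyS
      simp only [edom, Set.mem_setOf_eq] at hy
      have hSclosed : IsClosed (Prod.fst '' K) := (hKcomp.image continuous_fst).isClosed
      obtain ⟨f, c, hfc, hcy⟩ := geometric_hahn_banach_closed_point hSconv hSclosed hyS
      set z := (InnerProductSpace.toDual ℝ (En n)).symm f with hz
      have hzf : ∀ x : En n, (inner ℝ z x : ℝ) = f x := fun x => InnerProductSpace.toDual_symm_apply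
      obtain ⟨T, hT⟩ : ∃ T : ℝ, ∀ p ∈ K, -p.2 ≤ T := by
        obtain ⟨T, hT⟩ := (hKcomp.image continuous_snd.neg).bddAbove
        exact ⟨T, fun p hp => hT ⟨p, hp, rfl⟩⟩
      apply hy
      rw [hleg]
      apply ereal_iSup_top
      rintro ⟨M, hM⟩
      have hd : 0 < f y - c := sub_pos.2 hcy
      set lam : ℝ := max ((M + T + 1) / (f y - c)) 0 with hlam
      have hlam0 : 0 ≤ lam := le_max_right _ _
      have hlam1 : M + T + 1 ≤ lam * (f y - c) := by
        have h5 : (M + T + 1) / (f y - c) ≤ lam := le_max_left _ _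
        calc M + T + 1 = ((M + T + 1) / (f y - c)) * (f y - c) :=
              (div_mul_cancel₀ _ hd.ne').symm
          _ ≤ lam * (f y - c) := mul_le_mul_of_nonneg_right h5 hd.le
      have hvz : v (lam • z) ≤ lam * c + T := by
        refine himK _ _ fun p hp => ?_
        have h1 : (inner ℝ (lam • z) p.1 : ℝ) = lam * f p.1 := by
          rw [real_inner_smul_left, hzf]
        have h2 : f p.1 < c := hfc p.1 ⟨p, hp, rfl⟩
        have h3 := hT p hp
        have h4 := mul_le_mul_of_nonneg_left h2.le hlam0
        rw [h1]
        linarith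
      have hcontr : M < φ y (lam • z) := by
        have h1 : (inner ℝ (lam • z) y : ℝ) = lam * f y := by
          rw [real_inner_smul_left, hzf]
        simp only [hφ]
        rw [h1]
        nlinarith
      exact absurd (hM (Set.mem_range_self (lam • z))) (not_le.2 hcontr)
    · rintro y ⟨p, hp, rfl⟩
      exact hKdom p hp
  have hdomconv : Convex ℝ (edom (legendre u)) := hdom_eq ▸ hSconv
  have hdomcomp : IsCompact (edom (legendre u)) := hdom_eq ▸ hKcomp.image continuous_fst
  have hdomne : (edom (legendre u)).Nonempty := by
    obtain ⟨p, hp⟩ := hKne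
    exact ⟨p.1, hKdom p hp⟩
  -- lower semicontinuity
  have hlsc : LowerSemicontinuous (legendre u) := by
    have he : legendre u = fun y => ⨆ z, ((φ y z : ℝ) : EReal) := funext hleg
    rw [he]
    apply lowerSemicontinuous_iSup
    intro z
    apply Continuous.lowerSemicontinuous
    apply continuous_coe_real_ereal.comp
    simp only [hφ]
    exact (continuous_const.inner continuous_id).sub continuous_const
  -- never bot
  have hbot : ∀ y, legendre u y ≠ ⊥ := by
    intro y h
    have h1 : ((φ y 0 : ℝ) : EReal) ≤ legendre u y := by
      rw [hleg]; exact le_iSup (fun z => ((φ y z : ℝ) : EReal)) 0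
    rw [h] at h1
    exact EReal.coe_ne_bot _ (le_bot_iff.1 h1)
  -- epigraph convexity
  have hcomb : ∀ (y₁ y₂ : En n) (a b : ℝ), a + b = 1 → ∀ z,
      φ (a • y₁ + b • y₂) z = a * φ y₁ z + b * φ y₂ z := by
    intro y₁ y₂ a b hab z
    simp only [hφ]
    rw [inner_add_right, real_inner_smul_right, real_inner_smul_right]
    linear_combination (v z) * hab
  have hepi : Convex ℝ {p : En n × ℝ | legendre u p.1 ≤ ((p.2 : ℝ) : EReal)} := by
    intro p hp q hq a b ha hb hab
    simp only [Set.mem_setOf_eq] at hp hq ⊢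
    have hps : ∀ z, φ p.1 z ≤ p.2 := by
      intro z
      refine EReal.coe_le_coe_iff.1 (le_trans ?_ hp)
      rw [hleg]; exact le_iSup (fun z => ((φ p.1 z : ℝ) : EReal)) z
    have hqs : ∀ z, φ q.1 z ≤ q.2 := by
      intro z
      refine EReal.coe_le_coe_iff.1 (le_trans ?_ hq)
      rw [hleg]; exact le_iSup (fun z => ((φ q.1 z : ℝ) : EReal)) z
    have hfst : (a • p + b • q).1 = a • p.1 + b • q.1 := rfl
    have hsnd : (a • p + b • q).2 = a * p.2 + b * q.2 := rfl
    rw [hfst, hsnd, hleg]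
    refine iSup_le fun z => EReal.coe_le_coe_iff.2 ?_
    rw [hcomb p.1 q.1 a b hab z]
    have := mul_le_mul_of_nonneg_left (hps z) ha
    have := mul_le_mul_of_nonneg_left (hqs z) hb
    linarith
  -- the Lipschitz part
  set D := interior (edom (legendre u)) with hD
  have hDopen : IsOpen D := isOpen_interior
  have hDsub : D ⊆ edom (legendre u) := interior_subset
  have hwconv : ConvexOn ℝ (edom (legendre u)) w := by
    refine ⟨hdomconv, ?_⟩
    intro y₁ h₁ y₂ h₂ a b ha hb hab
    have hmem : a • y₁ + b • y₂ ∈ edom (legendre u) := hdomconv h₁ h₂ ha hb hab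
    simp only [smul_eq_mul]
    refine hwle _ hmem _ fun z => ?_
    rw [hcomb y₁ y₂ a b hab z]
    have := mul_le_mul_of_nonneg_left (hF y₁ h₁ z) ha
    have := mul_le_mul_of_nonneg_left (hF y₂ h₂ z) hb
    linarith
  have hwcontD : ContinuousOn w D := hwconv.continuousOn_interior
  have hattain : ∀ y ∈ D, ∃ x, ∀ z, φ y z ≤ φ y x := by
    intro y hyD
    have hy : y ∈ edom (legendre u) := hDsub hyD
    obtain ⟨ε, hε, hball⟩ := Metric.isOpen_iff.1 hDopen y hyD
    have hBD : Metric.closedBall y (ε / 2) ⊆ D :=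
      (Metric.closedBall_subset_ball (by linarith)).trans hball
    obtain ⟨M, hM⟩ : ∃ M : ℝ, ∀ y' ∈ Metric.closedBall y (ε / 2), w y' ≤ M := by
      obtain ⟨M, hM⟩ :=
        ((isCompact_closedBall y (ε / 2)).image_of_continuousOn (hwcontD.mono hBD)).bddAbove
      exact ⟨M, fun y' h => hM ⟨y', h, rfl⟩⟩
    have hout : ∀ z : En n, z ≠ 0 → φ y z ≤ M - ε / 2 * ‖z‖ := by
      intro z hz
      have hznorm : (0:ℝ) < ‖z‖ := norm_pos_iff.2 hz
      set y' := y + (ε / 2 * ‖z‖⁻¹) • z with hy'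
      have hy'B : y' ∈ Metric.closedBall y (ε / 2) := by
        simp only [Metric.mem_closedBall, hy', dist_self_add_left, norm_smul]
        rw [Real.norm_eq_abs, abs_of_nonneg (by positivity)]
        rw [mul_assoc, inv_mul_cancel₀ hznorm.ne']
        simp [le_of_eq, hε.le]
      have h1 : (inner ℝ z y' : ℝ) = (inner ℝ z y : ℝ) + ε / 2 * ‖z‖ := by
        rw [hy', inner_add_right, real_inner_smul_right, real_inner_self_eq_norm_sq]
        field_simp
      have h3 : φ y' z ≤ w y' := hF y' (hDsub (hBD hy'B)) z
      have h4 := hM y' hy'B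
      simp only [hφ] at h3 ⊢
      rw [h1] at h3
      linarith
    set R₀ : ℝ := max ((M - (w y - 1)) / (ε / 2)) 1 with hR₀
    have hR₀a : (M - (w y - 1)) / (ε / 2) ≤ R₀ := le_max_left _ _
    have hR₀b : (1:ℝ) ≤ R₀ := le_max_right _ _
    clear_value R₀
    have hfar : ∀ z : En n, R₀ < ‖z‖ → φ y z ≤ w y - 1 := by
      intro z hz
      have hz0 : z ≠ 0 := by
        intro h; rw [h, norm_zero] at hz
        linarith
      have h6 := hout z hz0
      have hε2 : (0:ℝ) < ε / 2 := by linarith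
      have h7 : M - (w y - 1) ≤ ε / 2 * R₀ := by
        have h5 := hR₀a
        rw [div_le_iff₀ hε2] at h5
        linarith [mul_comm R₀ (ε / 2)]
      have h8 : ε / 2 * R₀ ≤ ε / 2 * ‖z‖ := by
        apply mul_le_mul_of_nonneg_left hz.le hε2.le
      calc φ y z ≤ M - ε / 2 * ‖z‖ := h6
        _ ≤ M - ε / 2 * R₀ := by linarith only [h8]
        _ ≤ w y - 1 := by linarith only [h7]
    obtain ⟨x, hxB, hxmax⟩ :=
      (isCompact_closedBall (0 : En n) R₀).exists_isMaxOn
        ⟨0, Metric.mem_closedBall_self (by positivity)⟩ (hφcont y).continuousOn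
    refine ⟨x, fun z => ?_⟩
    by_cases hzB : z ∈ Metric.closedBall (0 : En n) R₀
    · exact hxmax hzB
    · have hz : R₀ < ‖z‖ := by
        simpa [Metric.mem_closedBall, dist_zero_right, not_le] using hzB
      obtain ⟨z₀, hz₀⟩ : ∃ z₀, w y - 1 < φ y z₀ := by
        have hlt : w y - 1 < ⨆ z, φ y z := by
          rw [← (hwe y hy).2]; linarith
        exact exists_lt_of_lt_ciSup hlt
      have hz₀B : z₀ ∈ Metric.closedBall (0 : En n) R₀ := by
        by_contra h
        have h8 : R₀ < ‖z₀‖ := by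
          simpa [Metric.mem_closedBall, dist_zero_right, not_le] using h
        linarith [hfar z₀ h8]
      have h9 : φ y z₀ ≤ φ y x := hxmax hz₀B
      linarith [hfar z hz]
  have hinnerE : ∀ (y₁ x z : En n),
      (inner ℝ y₁ (z - x) : ℝ) = (inner ℝ z y₁ : ℝ) - (inner ℝ x y₁ : ℝ) := by
    intro y₁ x z
    rw [inner_sub_right, real_inner_comm z y₁, real_inner_comm x y₁]
  have hmaxsub : ∀ y ∈ D, ∃ x, y ∈ subdiff v x := by
    intro y hy
    obtain ⟨x, hx⟩ := hattain y hy
    refine ⟨x, fun z => ?_⟩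
    have h1 := hx z
    simp only [hφ] at h1
    rw [hinnerE y x z]
    linarith
  set A := D ∩ subdiffImage v C with hA
  have hDA : D \ A ⊆ subdiffImage v Cᶜ := by
    rintro y ⟨hyD, hyA⟩
    obtain ⟨x, hx⟩ := hmaxsub y hyD
    have hxC : x ∉ C := fun hxC => hyA ⟨hyD, Set.mem_biUnion hxC hx⟩
    exact Set.mem_biUnion hxC hx
  have hDcl : D ⊆ closure A := by
    intro y hyD
    rw [Metric.mem_closure_iff]
    intro ε hε
    by_contra h
    push_neg at h
    have hOsub : Metric.ball y ε ∩ D ⊆ subdiffImage v Cᶜ := by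
      rintro b ⟨hb1, hb2⟩
      refine hDA ⟨hb2, fun hbA => ?_⟩
      have := h b hbA
      rw [Metric.mem_ball, dist_comm] at hb1
      exact absurd this (not_le.2 hb1)
    have hpos : 0 < volume (Metric.ball y ε ∩ D) :=
      (Metric.isOpen_ball.inter hDopen).measure_pos volume ⟨y, Metric.mem_ball_self hε, hyD⟩
    have hzero : volume (Metric.ball y ε ∩ D) = 0 :=
      le_antisymm (hCnull ▸ measure_mono hOsub) zero_le
    rw [hzero] at hpos
    exact lt_irrefl _ hpos
  obtain ⟨R₁, hR₁⟩ := hCcomp.isBounded.subset_closedBall 0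
  set R : ℝ := max R₁ 0 with hR
  have hR0 : (0:ℝ) ≤ R := le_max_right _ _
  have hxR : ∀ x ∈ C, ‖x‖ ≤ R := by
    intro x hx
    have := hR₁ hx
    rw [Metric.mem_closedBall, dist_zero_right] at this
    exact this.trans (le_max_left _ _)
  have hkey : ∀ y₁ ∈ A, ∀ y₂ ∈ edom (legendre u), w y₁ - w y₂ ≤ R * ‖y₁ - y₂‖ := by
    rintro y₁ ⟨hy₁D, hy₁A⟩ y₂ hy₂
    rw [subdiffImage, Set.mem_iUnion₂] at hy₁A
    obtain ⟨x, hxC, hyx⟩ := hy₁A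
    have hsub : ∀ z, v x + (inner ℝ y₁ (z - x) : ℝ) ≤ v z := hyx
    have h1 : w y₁ ≤ φ y₁ x := by
      refine hwle y₁ (hDsub hy₁D) _ fun z => ?_
      have h2 := hsub z
      rw [hinnerE y₁ x z] at h2
      simp only [hφ]
      linarith
    have h2 : φ y₂ x ≤ w y₂ := hF y₂ hy₂ x
    have h3 : φ y₁ x - φ y₂ x = (inner ℝ x (y₁ - y₂) : ℝ) := by
      simp only [hφ]
      rw [inner_sub_right]
      ring
    have h4 : (inner ℝ x (y₁ - y₂) : ℝ) ≤ ‖x‖ * ‖y₁ - y₂‖ := real_inner_le_norm x _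
    have h5 : ‖x‖ * ‖y₁ - y₂‖ ≤ R * ‖y₁ - y₂‖ :=
      mul_le_mul_of_nonneg_right (hxR x hxC) (norm_nonneg _)
    linarith
  have hDD : ∀ y₁ ∈ D, ∀ y₂ ∈ D, w y₁ - w y₂ ≤ R * ‖y₁ - y₂‖ := by
    intro y₁ hy₁ y₂ hy₂
    obtain ⟨as, hasA, hlim⟩ := mem_closure_iff_seq_limit.1 (hDcl hy₁)
    have hcont : ContinuousAt w y₁ := hwcontD.continuousAt (hDopen.mem_nhds hy₁)
    have hlim1 : Filter.Tendsto (fun k => w (as k) - R * ‖as k - y₂‖) Filter.atTop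
        (𝓝 (w y₁ - R * ‖y₁ - y₂‖)) :=
      (hcont.tendsto.comp hlim).sub (((hlim.sub tendsto_const_nhds).norm).const_mul R)
    have hle : ∀ k, w (as k) - R * ‖as k - y₂‖ ≤ w y₂ := by
      intro k
      have := hkey (as k) (hasA k) y₂ (hDsub hy₂)
      linarith
    have := le_of_tendsto hlim1 (Filter.Eventually.of_forall hle)
    linarith
  refine ⟨hlsc, hepi, hbot, hdomne, hdomcomp, ⟨R.toNNReal, ?_⟩⟩
  rw [lipschitzOnWith_iff_dist_le_mul]
  intro y₁ hy₁ y₂ hy₂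
  have h1 := hDD y₁ hy₁ y₂ hy₂
  have h2 := hDD y₂ hy₂ y₁ hy₁
  rw [norm_sub_rev] at h2
  rw [Real.dist_eq, dist_eq_norm, Real.coe_toNNReal _ hR0]
  exact abs_sub_le_iff.2 ⟨h1, h2⟩


end
end

section
/- Let n ≥ 1 and for k ∈ ℕ define u_k: ℝⁿ → (-∞,∞] by u_k(x) = k⟨x,x⟩ for x in the closed Euclidean unit ball Bⁿ and u_k(x) = ∞ otherwise. Then each u_k belongs to Conv_{cd,Lip}(ℝⁿ), the sequence u_k epi-converges to the function I_{{0}} (which equals 0 at the origin and ∞ elsewhere), and for ζ(t) = t^{1/(n+2)} one has ∫_{dom(u_k)} ζ(det(Hess u_k(x))) dx = (2k)^{n/(n+2)} V_n(Bⁿ) → ∞ as k → ∞, while ∫_{dom(I_{{0}})} ζ(det(Hess I_{{0}}(x))) dx = 0. In particular, the functional u ↦ ∫_{dom(u)} ζ(det(Hess u(x))) dx is not upper semicontinuous on Conv_{cd,Lip}(ℝⁿ) with respect to epi-convergence. -/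
open MeasureTheory Filter Topology Metric Set
open scoped ENNReal NNReal

noncomputable section

open scoped Classical in
/-- The sequence `u_k(x) = k⟨x,x⟩ + I_{Bⁿ}(x)` of Example 2.1. -/
noncomputable def exSeq (n : ℕ) (k : ℕ) : En n → EReal := fun x =>
  if x ∈ Metric.closedBall (0 : En n) 1
    then (((k : ℝ) * (inner ℝ x x : ℝ) : ℝ) : EReal) else (⊤ : EReal)

open scoped Classical in
/-- The function `I_{{0}}`, equal to `0` at the origin and `∞` elsewhere. -/
noncomputable def exLimit (n : ℕ) : En n → EReal := fun x =>
  if x = 0 then (0 : EReal) else (⊤ : EReal)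

section AuxLemmas

variable {n : ℕ}

lemma quadratic_vanish {x g : En n} {A : En n →L[ℝ] En n}
    (hsym : ∀ a b : En n, (inner ℝ (A a) b : ℝ) = inner ℝ a (A b))
    (h : Tendsto (fun y => ((inner ℝ g (y - x) : ℝ) +
        (1/2) * (inner ℝ (A (y - x)) (y - x) : ℝ)) / ‖y - x‖ ^ 2)
      (𝓝[≠] x) (𝓝 0)) : g = 0 ∧ A = 0 := by
  have key : ∀ v : En n, (inner ℝ g v : ℝ) = 0 ∧ (inner ℝ (A v) v : ℝ) = 0 := by
    intro v
    rcases eq_or_ne v 0 with rfl | hv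
    · simp
    have hvn : (0:ℝ) < ‖v‖ := norm_pos_iff.2 hv
    have hpath : Tendsto (fun t : ℝ => x + t • v) (𝓝[≠] (0:ℝ)) (𝓝[≠] x) := by
      apply tendsto_nhdsWithin_of_tendsto_nhds_of_eventually_within
      · have hc : Continuous fun t : ℝ => x + t • v := by continuity
        have := hc.tendsto 0
        simpa using this.mono_left nhdsWithin_le_nhds
      · filter_upwards [self_mem_nhdsWithin] with t ht
        simp only [Set.mem_compl_iff, Set.mem_singleton_iff] at ht ⊢
        intro hc
        exact ht (by
          have : t • v = 0 := by
            have := sub_eq_zero.2 hc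
            simpa using this
          rcases smul_eq_zero.1 this with h0 | h0
          · exact h0
          · exact absurd h0 hv)
    set a : ℝ := (inner ℝ g v : ℝ) with ha
    set c : ℝ := (1/2) * (inner ℝ (A v) v : ℝ) with hc
    have hφ : Tendsto (fun t : ℝ => (t * a + t^2 * c) / (t^2 * ‖v‖^2)) (𝓝[≠] (0:ℝ)) (𝓝 0) := by
      have hcomp := h.comp hpath
      refine hcomp.congr fun t => ?_
      simp only [Function.comp_apply, add_sub_cancel_left]
      rw [real_inner_smul_right, A.map_smul, real_inner_smul_left, real_inner_smul_right,
        norm_smul]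
      simp only [Real.norm_eq_abs, mul_pow, sq_abs]
      rw [ha, hc]
      ring_nf
    have hmul : Tendsto (fun t : ℝ => ((t * a + t^2 * c) / (t^2 * ‖v‖^2)) * (t * ‖v‖^2))
        (𝓝[≠] (0:ℝ)) (𝓝 0) := by
      have h2 : Tendsto (fun t : ℝ => t * ‖v‖^2) (𝓝[≠] (0:ℝ)) (𝓝 0) := by
        have : Tendsto (fun t : ℝ => t * ‖v‖^2) (𝓝 (0:ℝ)) (𝓝 (0 * ‖v‖^2)) :=
          (continuous_id.mul continuous_const).tendsto 0
        simpa using this.mono_left nhdsWithin_le_nhds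
      simpa using hφ.mul h2
    have heq : ∀ᶠ t in 𝓝[≠] (0:ℝ),
        ((t * a + t^2 * c) / (t^2 * ‖v‖^2)) * (t * ‖v‖^2) = a + t * c := by
      filter_upwards [self_mem_nhdsWithin] with t ht
      simp only [Set.mem_compl_iff, Set.mem_singleton_iff] at ht
      field_simp
    have hlin : Tendsto (fun t : ℝ => a + t * c) (𝓝[≠] (0:ℝ)) (𝓝 a) := by
      have : Tendsto (fun t : ℝ => a + t * c) (𝓝 (0:ℝ)) (𝓝 (a + 0 * c)) :=
        (continuous_const.add (continuous_id.mul continuous_const)).tendsto 0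
      simpa using this.mono_left nhdsWithin_le_nhds
    have ha0 : a = 0 := tendsto_nhds_unique hlin (Tendsto.congr' heq hmul)
    -- now c = 0
    have heq2 : ∀ᶠ t in 𝓝[≠] (0:ℝ),
        (t * a + t^2 * c) / (t^2 * ‖v‖^2) = c / ‖v‖^2 := by
      filter_upwards [self_mem_nhdsWithin] with t ht
      simp only [Set.mem_compl_iff, Set.mem_singleton_iff] at ht
      rw [ha0]
      field_simp
      ring
    have hc0 : c / ‖v‖^2 = 0 :=
      tendsto_nhds_unique (tendsto_const_nhds.congr' (heq2.mono fun t ht => ht.symm)) hφ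
    have hc0' : c = 0 := by
      field_simp at hc0
      simpa using hc0
    constructor
    · exact ha0
    · have : (1/2 : ℝ) * (inner ℝ (A v) v : ℝ) = 0 := hc ▸ hc0'
      linarith
  constructor
  · have := (key g).1
    exact inner_self_eq_zero.1 this
  · refine ContinuousLinearMap.ext fun v => ?_
    have hAv : ∀ w : En n, (inner ℝ (A v) w : ℝ) = 0 := by
      intro w
      have h1 := (key (v + w)).2
      have h2 := (key v).2
      have h3 := (key w).2
      have hsymvw : (inner ℝ (A w) v : ℝ) = inner ℝ (A v) w := by
        rw [hsym w v, real_inner_comm]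
      rw [map_add, inner_add_left, inner_add_right, inner_add_right, hsymvw] at h1
      linarith
    have : (inner ℝ (A v) (A v) : ℝ) = 0 := hAv (A v)
    simpa using inner_self_eq_zero.1 this

lemma hasAlexHessianAt_unique {f : En n → ℝ} {x g g' : En n} {H H' : En n →L[ℝ] En n}
    (h1 : HasAlexHessianAt f x g H) (h2 : HasAlexHessianAt f x g' H') :
    g = g' ∧ H = H' := by
  have hsym : ∀ a b : En n, (inner ℝ ((H' - H) a) b : ℝ) = inner ℝ a ((H' - H) b) := by
    intro a b
    simp only [ContinuousLinearMap.sub_apply, inner_sub_left, inner_sub_right]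
    rw [h1.1, h2.1]
  have hdiff := h1.2.sub h2.2
  rw [sub_zero] at hdiff
  have hq : Tendsto (fun y => ((inner ℝ (g' - g) (y - x) : ℝ) +
      (1/2) * (inner ℝ ((H' - H) (y - x)) (y - x) : ℝ)) / ‖y - x‖ ^ 2)
      (𝓝[≠] x) (𝓝 0) := by
    refine hdiff.congr fun y => ?_
    simp only [ContinuousLinearMap.sub_apply, inner_sub_left]
    rw [div_sub_div_same]
    ring_nf
  obtain ⟨hg, hH⟩ := quadratic_vanish hsym hq
  exact ⟨(sub_eq_zero.1 hg).symm, (sub_eq_zero.1 hH).symm⟩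

lemma hessDet_eq_of_hasAlex {f : En n → ℝ} {x g : En n} {H : En n →L[ℝ] En n}
    (h : HasAlexHessianAt f x g H) : hessDet f x = LinearMap.det H.toLinearMap := by
  have he : ∃ gH : En n × (En n →L[ℝ] En n), HasAlexHessianAt f x gH.1 gH.2 := ⟨(g, H), h⟩
  rw [hessDet, dif_pos he]
  rw [(hasAlexHessianAt_unique he.choose_spec h).2]

lemma nontrivial_En (hn : 1 ≤ n) : Nontrivial (En n) := by
  have : 0 < Module.finrank ℝ (En n) := by
    rw [finrank_euclideanSpace_fin]; omega
  exact Module.nontrivial_of_finrank_pos this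

lemma edom_exSeq (n k : ℕ) : edom (exSeq n k) = Metric.closedBall (0 : En n) 1 := by
  ext x
  simp only [edom, Set.mem_setOf_eq, exSeq]
  by_cases hx : x ∈ Metric.closedBall (0 : En n) 1
  · rw [if_pos hx]
    exact iff_of_true (EReal.coe_ne_top _) hx
  · rw [if_neg hx]
    exact iff_of_false (by simp) hx

lemma exSeq_toReal (k : ℕ) {x : En n} (hx : x ∈ Metric.closedBall (0 : En n) 1) :
    ((exSeq n k x).toReal) = (k : ℝ) * (inner ℝ x x : ℝ) := by
  rw [exSeq, if_pos hx, EReal.toReal_coe]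

lemma hasAlex_exSeq (k : ℕ) {x : En n} (hx : x ∈ ball (0 : En n) 1) :
    HasAlexHessianAt (fun y => (exSeq n k y).toReal) x ((2 * (k:ℝ)) • x)
      ((2 * (k:ℝ)) • ContinuousLinearMap.id ℝ (En n)) := by
  constructor
  · intro a b
    simp only [ContinuousLinearMap.smul_apply, ContinuousLinearMap.id_apply,
      real_inner_smul_left, real_inner_smul_right]
  · have hev : ∀ᶠ y in 𝓝[≠] x,
        ((exSeq n k y).toReal - (exSeq n k x).toReal
          - (inner ℝ ((2 * (k:ℝ)) • x) (y - x) : ℝ)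
          - (1/2) * (inner ℝ (((2 * (k:ℝ)) • ContinuousLinearMap.id ℝ (En n)) (y - x)) (y - x) : ℝ))
            / ‖y - x‖ ^ 2 = 0 := by
      have hb : ∀ᶠ y in 𝓝 x, y ∈ ball (0 : En n) 1 := isOpen_ball.eventually_mem hx
      filter_upwards [nhdsWithin_le_nhds hb] with y hy
      rw [exSeq_toReal k (ball_subset_closedBall hy),
        exSeq_toReal k (ball_subset_closedBall hx)]
      have hnum : (k : ℝ) * (inner ℝ y y : ℝ) - (k : ℝ) * (inner ℝ x x : ℝ)
          - (inner ℝ ((2 * (k:ℝ)) • x) (y - x) : ℝ)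
          - (1/2) * (inner ℝ (((2 * (k:ℝ)) • ContinuousLinearMap.id ℝ (En n)) (y - x)) (y - x) : ℝ)
          = 0 := by
        simp only [ContinuousLinearMap.smul_apply, ContinuousLinearMap.id_apply,
          real_inner_smul_left, inner_sub_left, inner_sub_right]
        have h := real_inner_comm y x
        linear_combination (-(k:ℝ)) * h
      rw [hnum, zero_div]
    exact tendsto_const_nhds.congr' (hev.mono fun y hy => hy.symm)

lemma hessDet_exSeq (k : ℕ) {x : En n} (hx : x ∈ ball (0 : En n) 1) :
    hessDet (fun y => (exSeq n k y).toReal) x = (2 * (k:ℝ)) ^ n := by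
  rw [hessDet_eq_of_hasAlex (hasAlex_exSeq k hx)]
  have h1 : ((2 * (k:ℝ)) • ContinuousLinearMap.id ℝ (En n)).toLinearMap
      = (2 * (k:ℝ)) • (LinearMap.id : En n →ₗ[ℝ] En n) := rfl
  rw [h1, LinearMap.det_smul, LinearMap.det_id, finrank_euclideanSpace_fin, mul_one]

lemma hessDetE_exSeq (hn : 1 ≤ n) (k : ℕ) {x : En n} (hx : x ∈ ball (0 : En n) 1) :
    hessDetE (exSeq n k) x = (2 * (k:ℝ)) ^ n := by
  haveI := nontrivial_En hn
  have hint : interior (edom (exSeq n k)) = ball (0 : En n) 1 := by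
    rw [edom_exSeq]
    exact interior_closedBall 0 one_ne_zero
  rw [hessDetE, if_pos (show x ∈ interior (edom (exSeq n k)) from hint ▸ hx)]
  exact hessDet_exSeq k hx

lemma ball_ae_closedBall (hn : 1 ≤ n) :
    (ball (0 : En n) 1 : Set (En n)) =ᵐ[volume] closedBall (0 : En n) 1 := by
  haveI := nontrivial_En hn
  have hs : volume (closedBall (0 : En n) 1 \ ball (0 : En n) 1) = 0 := by
    refine measure_mono_null ?_ (Measure.addHaar_sphere volume (0 : En n) 1)
    intro x hx
    rw [mem_sphere]
    exact le_antisymm hx.1 (not_lt.1 fun h => hx.2 h)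
  have hs' : volume (ball (0 : En n) 1 \ closedBall (0 : En n) 1) = 0 := by
    rw [Set.diff_eq_empty.2 ball_subset_closedBall]
    simp
  exact (MeasureTheory.ae_eq_set).2 ⟨hs', hs⟩

lemma integral_exSeq (hn : 1 ≤ n) (k : ℕ) :
    ∫⁻ x in edom (exSeq n k),
        ENNReal.ofReal ((hessDetE (exSeq n k) x) ^ ((1 : ℝ) / ((n : ℝ) + 2))) ∂volume
      = ENNReal.ofReal ((2 * (k : ℝ)) ^ ((n : ℝ) / ((n : ℝ) + 2))) *
          volume (Metric.closedBall (0 : En n) 1) := by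
  haveI := nontrivial_En hn
  have hae := ball_ae_closedBall (n := n) hn
  rw [edom_exSeq, ← setLIntegral_congr hae]
  have hfun : ∀ x ∈ ball (0 : En n) 1,
      ENNReal.ofReal ((hessDetE (exSeq n k) x) ^ ((1 : ℝ) / ((n : ℝ) + 2)))
        = ENNReal.ofReal ((2 * (k : ℝ)) ^ ((n : ℝ) / ((n : ℝ) + 2))) := by
    intro x hx
    rw [hessDetE_exSeq hn k hx]
    congr 1
    rw [← Real.rpow_natCast (2 * (k:ℝ)) n, ← Real.rpow_mul (by positivity), mul_one_div]
  rw [setLIntegral_congr_fun measurableSet_ball hfun, setLIntegral_const,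
    measure_congr hae]

lemma tendsto_integral_exSeq (hn : 1 ≤ n) :
    Tendsto (fun k : ℕ => ENNReal.ofReal ((2 * (k : ℝ)) ^ ((n : ℝ) / ((n : ℝ) + 2))) *
        volume (Metric.closedBall (0 : En n) 1)) atTop (𝓝 (⊤ : ℝ≥0∞)) := by
  haveI := nontrivial_En hn
  have hn' : (0:ℝ) < (n:ℝ) := by exact_mod_cast hn
  have hc : (0:ℝ) < (n : ℝ) / ((n : ℝ) + 2) := by positivity
  have h1 : Tendsto (fun k : ℕ => 2 * (k : ℝ)) atTop atTop :=
    (tendsto_natCast_atTop_atTop).const_mul_atTop two_pos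
  have h2 : Tendsto (fun k : ℕ => (2 * (k : ℝ)) ^ ((n : ℝ) / ((n : ℝ) + 2))) atTop atTop :=
    (tendsto_rpow_atTop hc).comp h1
  have h3 : Tendsto (fun k : ℕ => ENNReal.ofReal ((2 * (k : ℝ)) ^ ((n : ℝ) / ((n : ℝ) + 2))))
      atTop (𝓝 (⊤ : ℝ≥0∞)) := ENNReal.tendsto_ofReal_atTop.comp h2
  have hV : volume (Metric.closedBall (0 : En n) 1) ≠ 0 :=
    (measure_closedBall_pos volume (0 : En n) one_pos).ne'
  have := ENNReal.Tendsto.mul_const (b := volume (Metric.closedBall (0 : En n) 1)) h3 (Or.inl (by simp))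
  rwa [ENNReal.top_mul hV] at this

lemma integral_exLimit (hn : 1 ≤ n) :
    ∫⁻ x in edom (exLimit n),
        ENNReal.ofReal ((hessDetE (exLimit n) x) ^ ((1 : ℝ) / ((n : ℝ) + 2))) ∂volume = 0 := by
  haveI := nontrivial_En hn
  have hed : edom (exLimit n) = {(0 : En n)} := by
    ext x
    simp only [edom, Set.mem_setOf_eq, exLimit, Set.mem_singleton_iff]
    by_cases hx : x = (0 : En n)
    · rw [if_pos hx]
      exact iff_of_true (by simp) hx
    · rw [if_neg hx]
      exact iff_of_false (by simp) hx
  rw [hed]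
  have h0 : volume ({(0 : En n)} : Set (En n)) = 0 := measure_singleton _
  rw [setLIntegral_measure_zero _ _ h0]

lemma exSeq_nonneg (k : ℕ) (x : En n) : (0 : EReal) ≤ exSeq n k x := by
  rw [exSeq]
  split
  · exact_mod_cast EReal.coe_nonneg.2 (mul_nonneg (Nat.cast_nonneg k) real_inner_self_nonneg)
  · exact le_top

lemma exSeq_ge (k : ℕ) (x : En n) :
    (((k : ℝ) * (inner ℝ x x : ℝ) : ℝ) : EReal) ≤ exSeq n k x := by
  rw [exSeq]
  split
  · exact le_refl _
  · exact le_top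

lemma exSeq_tendsto_top {x : En n} (hx0 : x ≠ 0) {xs : ℕ → En n}
    (hxs : Tendsto xs atTop (𝓝 x)) :
    Tendsto (fun k => exSeq n k (xs k)) atTop (𝓝 (⊤ : EReal)) := by
  rw [EReal.tendsto_nhds_top_iff_real]
  intro M
  set c : ℝ := ‖x‖ / 2 with hcdef
  have hc : 0 < c := by
    have : 0 < ‖x‖ := norm_pos_iff.2 hx0
    positivity
  have hnorm : Tendsto (fun k => ‖xs k‖) atTop (𝓝 ‖x‖) := hxs.norm
  have hev1 : ∀ᶠ k in atTop, c < ‖xs k‖ :=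
    hnorm.eventually (eventually_gt_nhds (by
      have : 0 < ‖x‖ := norm_pos_iff.2 hx0
      rw [hcdef]; linarith))
  set K : ℕ := ⌈(|M| + 1) / c ^ 2⌉₊ with hK
  have hev2 : ∀ᶠ k in atTop, K ≤ k := eventually_ge_atTop K
  filter_upwards [hev1, hev2] with k hk1 hk2
  rw [exSeq]
  split
  · rw [EReal.coe_lt_coe_iff]
    have hinner : (inner ℝ (xs k) (xs k) : ℝ) = ‖xs k‖ ^ 2 := real_inner_self_eq_norm_sq _
    have h1 : c ^ 2 ≤ ‖xs k‖ ^ 2 := by nlinarith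
    have h2 : (|M| + 1) ≤ (K : ℝ) * c ^ 2 := by
      have := Nat.le_ceil ((|M| + 1) / c ^ 2)
      rw [hK]
      calc (|M| + 1) = (|M| + 1) / c ^ 2 * c ^ 2 := by field_simp
        _ ≤ (⌈(|M| + 1) / c ^ 2⌉₊ : ℝ) * c ^ 2 := by
            exact mul_le_mul_of_nonneg_right this (by positivity)
    have h3 : (K : ℝ) ≤ (k : ℝ) := by exact_mod_cast hk2
    have h4 : (K : ℝ) * c ^ 2 ≤ (k : ℝ) * (inner ℝ (xs k) (xs k) : ℝ) := by
      rw [hinner]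
      have := mul_le_mul h3 h1 (by positivity) (Nat.cast_nonneg k)
      linarith
    calc M ≤ |M| := le_abs_self M
      _ < (K : ℝ) * c ^ 2 := by linarith
      _ ≤ _ := h4
  · exact EReal.coe_lt_top M

lemma epiConverges_exSeq (n : ℕ) : EpiConverges (exSeq n) (exLimit n) := by
  intro x
  constructor
  · intro xs hxs
    by_cases hx0 : x = 0
    · subst hx0
      rw [exLimit, if_pos rfl]
      refine le_liminf_of_le (by isBoundedDefault) ?_
      exact Filter.Eventually.of_forall fun k => exSeq_nonneg k (xs k)
    · rw [exLimit, if_neg hx0]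
      exact (exSeq_tendsto_top hx0 hxs).liminf_eq.ge
  · refine ⟨fun _ => x, tendsto_const_nhds, ?_⟩
    by_cases hx0 : x = 0
    · subst hx0
      rw [exLimit, if_pos rfl]
      have hmem : (0 : En n) ∈ Metric.closedBall (0 : En n) 1 := by
        simp
      have : (fun k => exSeq n k (0 : En n)) = fun _ => (0 : EReal) := by
        funext k
        rw [exSeq, if_pos hmem]
        simp
      rw [this]
      exact tendsto_const_nhds
    · rw [exLimit, if_neg hx0]
      exact exSeq_tendsto_top hx0 tendsto_const_nhds

lemma inner_combo_le {x y : En n} {a b : ℝ} (ha : 0 ≤ a) (hb : 0 ≤ b) (hab : a + b = 1) :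
    (inner ℝ (a • x + b • y) (a • x + b • y) : ℝ) ≤ a * (inner ℝ x x : ℝ) + b * (inner ℝ y y : ℝ) := by
  have h1 : (0:ℝ) ≤ inner ℝ (x - y) (x - y) := real_inner_self_nonneg
  have h2 : (inner ℝ (x - y) (x - y) : ℝ)
      = (inner ℝ x x : ℝ) - 2 * (inner ℝ x y : ℝ) + (inner ℝ y y : ℝ) := by
    simp only [inner_sub_left, inner_sub_right]
    have := real_inner_comm x y
    linarith
  have h3 : (inner ℝ (a • x + b • y) (a • x + b • y) : ℝ)
      = a^2 * (inner ℝ x x : ℝ) + 2*a*b * (inner ℝ x y : ℝ) + b^2 * (inner ℝ y y : ℝ) := by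
    simp only [inner_add_left, inner_add_right, real_inner_smul_left, real_inner_smul_right]
    have h := real_inner_comm y x
    linear_combination (-(a*b)) * h
  have h4 : (0:ℝ) ≤ (inner ℝ x x : ℝ) - 2 * (inner ℝ x y : ℝ) + (inner ℝ y y : ℝ) := by linarith
  rw [h3]
  have h5 : a * (inner ℝ x x : ℝ) + b * (inner ℝ y y : ℝ)
      - (a^2 * (inner ℝ x x : ℝ) + 2*a*b * (inner ℝ x y : ℝ) + b^2 * (inner ℝ y y : ℝ))
      = a * b * ((inner ℝ x x : ℝ) - 2 * (inner ℝ x y : ℝ) + (inner ℝ y y : ℝ)) := by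
    have hb' : b = 1 - a := by linarith
    rw [hb']; ring
  linarith [mul_nonneg (mul_nonneg ha hb) h4]

lemma isConvCdLip_exSeq (n k : ℕ) : IsConvCdLip (exSeq n k) := by
  refine ⟨?_, ?_, ?_, ?_, ?_, ?_⟩
  · -- lower semicontinuous
    intro x y hy
    by_cases hx : x ∈ Metric.closedBall (0 : En n) 1
    · have hx' : exSeq n k x = (((k:ℝ) * (inner ℝ x x : ℝ) : ℝ) : EReal) := if_pos hx
      rw [hx'] at hy
      induction y using EReal.rec with
      | bot =>
        filter_upwards with z
        exact lt_of_lt_of_le (bot_lt_iff_ne_bot.2 (by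
          rw [exSeq]; split
          · exact EReal.coe_ne_bot _
          · exact top_ne_bot)) (le_refl _)
      | coe y' =>
        have hy' : y' < (k:ℝ) * (inner ℝ x x : ℝ) := EReal.coe_lt_coe_iff.1 hy
        have hcont : Continuous fun z : En n => (k:ℝ) * (inner ℝ z z : ℝ) := by
          exact continuous_const.mul (continuous_inner.comp (continuous_id.prodMk continuous_id))
        have hev : ∀ᶠ z in 𝓝 x, y' < (k:ℝ) * (inner ℝ z z : ℝ) :=
          (hcont.tendsto x).eventually (eventually_gt_nhds hy')
        filter_upwards [hev] with z hz
        exact lt_of_lt_of_le (EReal.coe_lt_coe_iff.2 hz) (exSeq_ge k z)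
      | top => exact absurd hy not_top_lt
    · have hx' : exSeq n k x = ⊤ := if_neg hx
      have hev : ∀ᶠ z in 𝓝 x, z ∉ Metric.closedBall (0 : En n) 1 :=
        Metric.isClosed_closedBall.isOpen_compl.eventually_mem hx
      filter_upwards [hev] with z hz
      rw [exSeq, if_neg hz]
      exact lt_of_lt_of_le (hx' ▸ hy) le_top
  · -- convex epigraph
    intro p hp q hq a b ha hb hab
    simp only [Set.mem_setOf_eq] at hp hq ⊢
    have hpmem : p.1 ∈ Metric.closedBall (0 : En n) 1 := by
      by_contra hc
      rw [exSeq, if_neg hc, top_le_iff] at hp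
      exact EReal.coe_ne_top _ hp
    have hqmem : q.1 ∈ Metric.closedBall (0 : En n) 1 := by
      by_contra hc
      rw [exSeq, if_neg hc, top_le_iff] at hq
      exact EReal.coe_ne_top _ hq
    have hp' : (k:ℝ) * (inner ℝ p.1 p.1 : ℝ) ≤ p.2 := by
      rw [exSeq, if_pos hpmem] at hp
      exact_mod_cast hp
    have hq' : (k:ℝ) * (inner ℝ q.1 q.1 : ℝ) ≤ q.2 := by
      rw [exSeq, if_pos hqmem] at hq
      exact_mod_cast hq
    have hmem : a • p.1 + b • q.1 ∈ Metric.closedBall (0 : En n) 1 :=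
      (convex_closedBall (0 : En n) 1) hpmem hqmem ha hb hab
    have hfst : (a • p + b • q).1 = a • p.1 + b • q.1 := rfl
    have hsnd : (a • p + b • q).2 = a * p.2 + b * q.2 := rfl
    rw [hfst, hsnd, exSeq, if_pos hmem]
    rw [EReal.coe_le_coe_iff]
    have hcombo := inner_combo_le (x := p.1) (y := q.1) ha hb hab
    have : (k:ℝ) * (inner ℝ (a • p.1 + b • q.1) (a • p.1 + b • q.1) : ℝ)
        ≤ a * ((k:ℝ) * (inner ℝ p.1 p.1 : ℝ)) + b * ((k:ℝ) * (inner ℝ q.1 q.1 : ℝ)) := by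
      nlinarith [Nat.cast_nonneg (α := ℝ) k]
    nlinarith [mul_le_mul_of_nonneg_left hp' ha, mul_le_mul_of_nonneg_left hq' hb]
  · intro x
    rw [exSeq]
    split
    · exact EReal.coe_ne_bot _
    · exact top_ne_bot
  · exact ⟨0, by rw [edom_exSeq]; simp⟩
  · rw [edom_exSeq]
    exact isCompact_closedBall _ _
  · refine ⟨2 * k, ?_⟩
    rw [lipschitzOnWith_iff_dist_le_mul]
    intro x hx y hy
    have hsub : interior (edom (exSeq n k)) ⊆ Metric.closedBall (0 : En n) 1 := by
      rw [edom_exSeq]; exact interior_subset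
    have hx1 : ‖x‖ ≤ 1 := mem_closedBall_zero_iff.1 (hsub hx)
    have hy1 : ‖y‖ ≤ 1 := mem_closedBall_zero_iff.1 (hsub hy)
    rw [exSeq_toReal k (hsub hx), exSeq_toReal k (hsub hy), Real.dist_eq]
    have hkey : (k:ℝ) * (inner ℝ x x : ℝ) - (k:ℝ) * (inner ℝ y y : ℝ)
        = (k:ℝ) * (inner ℝ (x + y) (x - y) : ℝ) := by
      simp only [inner_add_left, inner_sub_right]
      have h := real_inner_comm y x
      linear_combination (k:ℝ) * h
    rw [hkey, abs_mul, Nat.abs_cast]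
    have h1 : |(inner ℝ (x + y) (x - y) : ℝ)| ≤ ‖x + y‖ * ‖x - y‖ := abs_real_inner_le_norm _ _
    have h2 : ‖x + y‖ ≤ 2 := by
      calc ‖x + y‖ ≤ ‖x‖ + ‖y‖ := norm_add_le x y
        _ ≤ 2 := by linarith
    have h3 : dist x y = ‖x - y‖ := dist_eq_norm x y
    have hcast : ((2 * k : ℝ≥0) : ℝ) = 2 * (k : ℝ) := by push_cast; ring
    rw [hcast, h3]
    have h4 : (k:ℝ) * |(inner ℝ (x + y) (x - y) : ℝ)| ≤ (k:ℝ) * (2 * ‖x - y‖) := by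
      have : |(inner ℝ (x + y) (x - y) : ℝ)| ≤ 2 * ‖x - y‖ := by
        calc |(inner ℝ (x + y) (x - y) : ℝ)| ≤ ‖x + y‖ * ‖x - y‖ := h1
          _ ≤ 2 * ‖x - y‖ := mul_le_mul_of_nonneg_right h2 (norm_nonneg _)
      exact mul_le_mul_of_nonneg_left this (Nat.cast_nonneg k)
    linarith

end AuxLemmas

/-- Example 2.1. The functions `u_k(x) = k⟨x,x⟩ + I_{Bⁿ}(x)` belong to
`Conv_{cd,Lip}(ℝⁿ)`, epi-converge to `I_{{0}}`, and for `ζ(t) = t^{1/(n+2)}` the values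
`Z(u_k) = (2k)^{n/(n+2)} V_n(Bⁿ)` tend to `∞` while `Z(I_{{0}}) = 0`; in particular `Z` is not
upper semicontinuous with respect to epi-convergence. -/
theorem example_epi_convergence_not_usc {n : ℕ} (hn : 1 ≤ n) :
    (∀ k, IsConvCdLip (exSeq n k)) ∧
    EpiConverges (exSeq n) (exLimit n) ∧
    (∀ k, ∫⁻ x in edom (exSeq n k),
        ENNReal.ofReal ((hessDetE (exSeq n k) x) ^ ((1 : ℝ) / ((n : ℝ) + 2))) ∂volume
      = ENNReal.ofReal ((2 * (k : ℝ)) ^ ((n : ℝ) / ((n : ℝ) + 2))) *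
          volume (Metric.closedBall (0 : En n) 1)) ∧
    Filter.Tendsto
      (fun k => ∫⁻ x in edom (exSeq n k),
        ENNReal.ofReal ((hessDetE (exSeq n k) x) ^ ((1 : ℝ) / ((n : ℝ) + 2))) ∂volume)
      Filter.atTop (𝓝 (⊤ : ℝ≥0∞)) ∧
    (∫⁻ x in edom (exLimit n),
        ENNReal.ofReal ((hessDetE (exLimit n) x) ^ ((1 : ℝ) / ((n : ℝ) + 2))) ∂volume = 0) ∧
    ¬ (Filter.limsup
        (fun k => ∫⁻ x in edom (exSeq n k),
          ENNReal.ofReal ((hessDetE (exSeq n k) x) ^ ((1 : ℝ) / ((n : ℝ) + 2))) ∂volume)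
        Filter.atTop
      ≤ ∫⁻ x in edom (exLimit n),
          ENNReal.ofReal ((hessDetE (exLimit n) x) ^ ((1 : ℝ) / ((n : ℝ) + 2))) ∂volume) := by
  have hint : ∀ k, ∫⁻ x in edom (exSeq n k),
      ENNReal.ofReal ((hessDetE (exSeq n k) x) ^ ((1 : ℝ) / ((n : ℝ) + 2))) ∂volume
    = ENNReal.ofReal ((2 * (k : ℝ)) ^ ((n : ℝ) / ((n : ℝ) + 2))) *
        volume (Metric.closedBall (0 : En n) 1) := integral_exSeq hn
  have htend : Filter.Tendsto
      (fun k => ∫⁻ x in edom (exSeq n k),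
        ENNReal.ofReal ((hessDetE (exSeq n k) x) ^ ((1 : ℝ) / ((n : ℝ) + 2))) ∂volume)
      Filter.atTop (𝓝 (⊤ : ℝ≥0∞)) := by
    have hfe : (fun k => ∫⁻ x in edom (exSeq n k),
        ENNReal.ofReal ((hessDetE (exSeq n k) x) ^ ((1 : ℝ) / ((n : ℝ) + 2))) ∂volume)
      = fun k : ℕ => ENNReal.ofReal ((2 * (k : ℝ)) ^ ((n : ℝ) / ((n : ℝ) + 2))) *
          volume (Metric.closedBall (0 : En n) 1) := funext hint
    rw [hfe]
    exact tendsto_integral_exSeq hn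
  refine ⟨fun k => isConvCdLip_exSeq n k, epiConverges_exSeq n, hint, htend,
    integral_exLimit hn, ?_⟩
  intro hcon
  rw [integral_exLimit hn, htend.limsup_eq] at hcon
  simp at hcon

end
end
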